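/- arXiv:2507.01655 — 2 statements merged into one kernel-verified Lean document; each statement's English description precedes it below -/
import Mathlib

section
/- On the Lie algebra n_t (for every real t ≠ 0), the torsion 3-form T = −2t(e₁₂₆ − e₃₄₆) is parallel with respect to its torsion connection ∇: (∇_X T)(Y,Z,V) = 0 for all X,Y,Z,V. -/
open scoped BigOperators

noncomputable section

/-- The standard inner product on ℝ⁶. -/
def gIP (X Y : Fin 6 → ℝ) : ℝ := ∑ i, X i * Y i

/-- The standard orthonormal basis e₁,…,e₆ (0-indexed). -/
def e (i : Fin 6) : Fin 6 → ℝ := fun j => if j = i then 1 else 0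

/-- The 2-form e_{ij} (0-indexed). -/
def two (i j : Fin 6) (X Y : Fin 6 → ℝ) : ℝ := X i * Y j - X j * Y i

/-- The 3-form e_{ijk} (0-indexed). -/
def three (i j k : Fin 6) (X Y Z : Fin 6 → ℝ) : ℝ :=
  X i * (Y j * Z k - Y k * Z j) - X j * (Y i * Z k - Y k * Z i) + X k * (Y i * Z j - Y j * Z i)

/-- The 4-form e_{ijkl} (0-indexed). -/
def four (i j k l : Fin 6) (X Y Z W : Fin 6 → ℝ) : ℝ :=
  X i * three j k l Y Z W - X j * three i k l Y Z W
    + X k * three i j l Y Z W - X l * three i j k Y Z W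

/-- F = −e₁₂ − e₃₄ − e₅₆. -/
def Fform (X Y : Fin 6 → ℝ) : ℝ := -two 0 1 X Y - two 2 3 X Y - two 4 5 X Y

/-- Ψ⁺ = −e₁₃₅ + e₂₃₆ + e₁₄₆ + e₂₄₅. -/
def Psip (X Y Z : Fin 6 → ℝ) : ℝ :=
  -three 0 2 4 X Y Z + three 1 2 5 X Y Z + three 0 3 5 X Y Z + three 1 3 4 X Y Z

/-- Ψ⁻ = −e₁₃₆ − e₁₄₅ − e₂₃₅ + e₂₄₆. -/
def Psim (X Y Z : Fin 6 → ℝ) : ℝ :=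
  -three 0 2 5 X Y Z - three 0 3 4 X Y Z - three 1 2 4 X Y Z + three 1 3 5 X Y Z

/-- Φ(X,Y,Z,V) = F(X,Y)F(Z,V) + F(Y,Z)F(X,V) + F(Z,X)F(Y,V). -/
def Phi (X Y Z V : Fin 6 → ℝ) : ℝ :=
  Fform X Y * Fform Z V + Fform Y Z * Fform X V + Fform Z X * Fform Y V

/-- The orthogonal complex structure: Je₁=e₂, Je₂=−e₁, Je₃=e₄, Je₄=−e₃, Je₅=e₆, Je₆=−e₅. -/
def Jc (X : Fin 6 → ℝ) : Fin 6 → ℝ := ![-X 1, X 0, -X 3, X 2, -X 5, X 4]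

/-- Θ⁺ = e₁₃₅ − e₁₄₆ − e₂₃₆ − e₂₄₅. -/
def Thp (X Y Z : Fin 6 → ℝ) : ℝ :=
  three 0 2 4 X Y Z - three 0 3 5 X Y Z - three 1 2 5 X Y Z - three 1 3 4 X Y Z

/-- Θ⁻ = e₁₃₆ + e₁₄₅ + e₂₃₅ − e₂₄₆. -/
def Thm (X Y Z : Fin 6 → ℝ) : ℝ :=
  three 0 2 5 X Y Z + three 0 3 4 X Y Z + three 1 2 4 X Y Z - three 1 3 5 X Y Z

/-- Nijenhuis tensor N(X,Y) = [JX,JY] − [X,Y] − J[JX,Y] − J[X,JY] for a bracket `br`. -/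
def Nij (br : (Fin 6 → ℝ) → (Fin 6 → ℝ) → (Fin 6 → ℝ)) (X Y : Fin 6 → ℝ) : Fin 6 → ℝ :=
  br (Jc X) (Jc Y) - br X Y - Jc (br (Jc X) Y) - Jc (br X (Jc Y))

/-- Chevalley–Eilenberg differential of a 2-form. -/
def d2 (br : (Fin 6 → ℝ) → (Fin 6 → ℝ) → (Fin 6 → ℝ))
    (α : (Fin 6 → ℝ) → (Fin 6 → ℝ) → ℝ) (X Y Z : Fin 6 → ℝ) : ℝ :=
  -α (br X Y) Z + α (br X Z) Y - α (br Y Z) X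

/-- Chevalley–Eilenberg differential of a 3-form. -/
def d3 (br : (Fin 6 → ℝ) → (Fin 6 → ℝ) → (Fin 6 → ℝ))
    (α : (Fin 6 → ℝ) → (Fin 6 → ℝ) → (Fin 6 → ℝ) → ℝ) (X Y Z W : Fin 6 → ℝ) : ℝ :=
  -α (br X Y) Z W + α (br X Z) Y W - α (br X W) Y Z
    - α (br Y Z) X W + α (br Y W) X Z - α (br Z W) X Y

/-- The torsion connection ∇ associated with a bracket `br` and a 3-form `T`:
g(∇_X Y, Z) = ½( g([X,Y],Z) − g([Y,Z],X) + g([Z,X],Y) + T(X,Y,Z) ). -/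
def nab (br : (Fin 6 → ℝ) → (Fin 6 → ℝ) → (Fin 6 → ℝ))
    (T : (Fin 6 → ℝ) → (Fin 6 → ℝ) → (Fin 6 → ℝ) → ℝ)
    (X Y : Fin 6 → ℝ) : Fin 6 → ℝ :=
  fun m => (1/2) * (gIP (br X Y) (e m) - gIP (br Y (e m)) X + gIP (br (e m) X) Y + T X Y (e m))

/-- The covariant derivative of a 3-form α:
(∇_X α)(Y,Z,V) = −α(∇_X Y,Z,V) − α(Y,∇_X Z,V) − α(Y,Z,∇_X V). -/
def nabForm3 (br : (Fin 6 → ℝ) → (Fin 6 → ℝ) → (Fin 6 → ℝ))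
    (T α : (Fin 6 → ℝ) → (Fin 6 → ℝ) → (Fin 6 → ℝ) → ℝ)
    (X Y Z V : Fin 6 → ℝ) : ℝ :=
  -α (nab br T X Y) Z V - α Y (nab br T X Z) V - α Y Z (nab br T X V)

/-- Curvature R(X,Y)Z = ∇_X∇_Y Z − ∇_Y∇_X Z − ∇_{[X,Y]}Z. -/
def Rmap (br : (Fin 6 → ℝ) → (Fin 6 → ℝ) → (Fin 6 → ℝ))
    (T : (Fin 6 → ℝ) → (Fin 6 → ℝ) → (Fin 6 → ℝ) → ℝ)
    (X Y Z : Fin 6 → ℝ) : Fin 6 → ℝ :=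
  nab br T X (nab br T Y Z) - nab br T Y (nab br T X Z) - nab br T (br X Y) Z

/-- R(X,Y,Z,V) = g(R(X,Y)Z,V). -/
def R4 (br : (Fin 6 → ℝ) → (Fin 6 → ℝ) → (Fin 6 → ℝ))
    (T : (Fin 6 → ℝ) → (Fin 6 → ℝ) → (Fin 6 → ℝ) → ℝ)
    (X Y Z V : Fin 6 → ℝ) : ℝ :=
  gIP (Rmap br T X Y Z) V

/-- The Lie bracket of 𝔫_t: [e₁,e₂] = 2t·e₆, [e₃,e₄] = −2t·e₆ (bilinear extension). -/
def brN (t : ℝ) (X Y : Fin 6 → ℝ) : Fin 6 → ℝ :=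
  (2 * t * two 0 1 X Y - 2 * t * two 2 3 X Y) • e 5

/-- The torsion 3-form T = −2t(e₁₂₆ − e₃₄₆) on 𝔫_t. -/
def TN (t : ℝ) (X Y Z : Fin 6 → ℝ) : ℝ :=
  -2 * t * (three 0 1 5 X Y Z - three 2 3 5 X Y Z)

/-!
The torsion connection of `𝔫_t` is `∇_X = 2t X₆ · A`, where `A = rotN` is the skew endomorphism rotating
the planes `⟨e₁, e₂⟩` and `⟨e₃, e₄⟩` in opposite senses and killing `e₅, e₆`. Each of `e₁₂₆` and
`e₃₄₆` is invariant under rotations of its own plane, so `A` acts on `T` by zero as a derivation,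
and `∇T = 0`.
-/

def rotN (Y : Fin 6 → ℝ) : Fin 6 → ℝ := ![Y 1, -Y 0, -Y 3, Y 2, 0, 0]

lemma nab_brN_TN (t : ℝ) (X Y : Fin 6 → ℝ) :
    nab (brN t) (TN t) X Y = (2 * t * X 5) • rotN Y := by
  funext m
  fin_cases m <;> simp [nab, brN, TN, gIP, three, two, e, rotN] <;> ring

lemma TN_derivation_rotN (t : ℝ) (Y Z V : Fin 6 → ℝ) :
    TN t (rotN Y) Z V + TN t Y (rotN Z) V + TN t Y Z (rotN V) = 0 := by
  simp only [TN, three, rotN, Matrix.cons_val]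
  ring

lemma nabForm3_brN_TN (t : ℝ) (X Y Z V : Fin 6 → ℝ) :
    nabForm3 (brN t) (TN t) (TN t) X Y Z V =
      -(2 * t * X 5) * (TN t (rotN Y) Z V + TN t Y (rotN Z) V + TN t Y Z (rotN V)) := by
  simp only [nabForm3, nab_brN_TN, TN, three, Pi.smul_apply, smul_eq_mul]
  ring

theorem stmt5_general (t : ℝ) :
    ∀ X Y Z V : Fin 6 → ℝ, nabForm3 (brN t) (TN t) (TN t) X Y Z V = 0 := by
  intro X Y Z V
  rw [nabForm3_brN_TN, TN_derivation_rotN, mul_zero]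

/-- on 𝔫_t (t ≠ 0), the torsion T = −2t(e₁₂₆ − e₃₄₆) is ∇-parallel. -/
theorem stmt5 (t : ℝ) (ht : t ≠ 0) :
    ∀ X Y Z V : Fin 6 → ℝ, nabForm3 (brN t) (TN t) (TN t) X Y Z V = 0 :=
  stmt5_general t
end
end

section
/- On the Lie algebra s^δ_{r,t} (δ = ±1, r ≠ 0, t ≠ 0 real), let ∇ be the torsion connection associated with the 3-form T = −(2δt/r²)(e₁₂₆ − e₃₄₆). Then: (1) ∇_X(JY) = J(∇_X Y) for all X,Y; (2) ∇Θ⁺ = 0 and ∇Θ⁻ = 0; (3) the torsion of ∇ satisfies g(∇_X Y − ∇_Y X − [X,Y], Z) = T(X,Y,Z) for all X,Y,Z; (4) the Lee form vanishes: θ(X) = −½ Σᵢ T(JX, eᵢ, Jeᵢ) = 0 for all X (balanced). -/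
open scoped BigOperators

noncomputable section

/-- The Lie bracket of s^δ_{r,t}: [e₂,e₅]=(2/t)e₁, [e₁,e₅]=−(2/t)e₂, [e₄,e₅]=−(2/t)e₃,
[e₃,e₅]=(2/t)e₄, [e₁,e₂]=(2δt/r²)e₆, [e₃,e₄]=−(2δt/r²)e₆ (bilinear extension). -/
def brS (δ r t : ℝ) (X Y : Fin 6 → ℝ) : Fin 6 → ℝ :=
  ((2 / t) * two 1 4 X Y) • e 0 + (-(2 / t) * two 0 4 X Y) • e 1
    + (-(2 / t) * two 3 4 X Y) • e 2 + ((2 / t) * two 2 4 X Y) • e 3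
    + ((2 * δ * t / r ^ 2) * two 0 1 X Y - (2 * δ * t / r ^ 2) * two 2 3 X Y) • e 5

/-- The torsion 3-form T = −(2δt/r²)(e₁₂₆ − e₃₄₆) on s^δ_{r,t}. -/
def TS (δ r t : ℝ) (X Y Z : Fin 6 → ℝ) : ℝ :=
  -(2 * δ * t / r ^ 2) * (three 0 1 5 X Y Z - three 2 3 5 X Y Z)

/-
The connection is ∇_X = c(X) A with c(X) = −(2/t)x₅ + (2δt/r²)x₆ and A = −J on ⟨e₁,e₂⟩, J on ⟨e₃,e₄⟩,
0 on ⟨e₅,e₆⟩. Thus A commutes with J and is trace-free as a complex endomorphism, i.e. A ∈ su(3),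
so it annihilates J and the complex volume form Θ⁺ + iΘ⁻. The torsion identity holds for the
connection of any antisymmetric bracket and any 3-form, and the Lee form vanishes because
contracting T with the Kähler form, the terms e₁₂₆ and e₃₄₆ give the same multiple of e₆.
-/

section TorsionConnection

variable {br : (Fin 6 → ℝ) → (Fin 6 → ℝ) → (Fin 6 → ℝ)}
  {T : (Fin 6 → ℝ) → (Fin 6 → ℝ) → (Fin 6 → ℝ) → ℝ}

lemma gIP_e (v : Fin 6 → ℝ) (m : Fin 6) : gIP v (e m) = v m := by
  simp [gIP, e]

lemma gIP_neg_left (v w : Fin 6 → ℝ) : gIP (-v) w = -gIP v w := by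
  simp [gIP]

lemma gIP_torsion_nab (hbr : ∀ X Y, br Y X = -br X Y) (hT : ∀ X Y Z, T Y X Z = -T X Y Z)
    (X Y Z : Fin 6 → ℝ) :
    gIP (nab br T X Y - nab br T Y X - br X Y) Z = ∑ m, T X Y (e m) * Z m := by
  refine Finset.sum_congr rfl fun m _ => ?_
  have hcomp : nab br T X Y m - nab br T Y X m - br X Y m = T X Y (e m) := by
    simp only [nab, hbr X Y, hbr (e m) X, hbr Y (e m), hT X Y, gIP_neg_left, gIP_e, Pi.neg_apply]
    ring
  simp only [Pi.sub_apply, hcomp]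

end TorsionConnection

def derivAction (A : (Fin 6 → ℝ) → (Fin 6 → ℝ)) (α : (Fin 6 → ℝ) → (Fin 6 → ℝ) → (Fin 6 → ℝ) → ℝ)
    (Y Z V : Fin 6 → ℝ) : ℝ :=
  α (A Y) Z V + α Y (A Z) V + α Y Z (A V)

lemma nabForm3_eq_neg_mul_derivAction {T α : (Fin 6 → ℝ) → (Fin 6 → ℝ) → (Fin 6 → ℝ) → ℝ}
    {br : (Fin 6 → ℝ) → (Fin 6 → ℝ) → (Fin 6 → ℝ)} {c : (Fin 6 → ℝ) → ℝ}
    {A : (Fin 6 → ℝ) → (Fin 6 → ℝ)} (hnab : ∀ X Y, nab br T X Y = c X • A Y)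
    (hα : ∀ (a : ℝ) Y Z V, α (a • Y) Z V = a * α Y Z V ∧ α Y (a • Z) V = a * α Y Z V ∧
      α Y Z (a • V) = a * α Y Z V)
    (X Y Z V : Fin 6 → ℝ) :
    nabForm3 br T α X Y Z V = -c X * derivAction A α Y Z V := by
  simp only [nabForm3, derivAction, hnab, (hα _ _ _ _).1, (hα _ _ _ _).2.1, (hα _ _ _ _).2.2]
  ring

def connCoeff (δ r t : ℝ) (X : Fin 6 → ℝ) : ℝ := -(2 / t) * X 4 + (2 * δ * t / r ^ 2) * X 5

def rotA (Y : Fin 6 → ℝ) : Fin 6 → ℝ := ![Y 1, -Y 0, -Y 3, Y 2, 0, 0]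

lemma nab_brS_TS (δ r t : ℝ) (X Y : Fin 6 → ℝ) :
    nab (brS δ r t) (TS δ r t) X Y = connCoeff δ r t X • rotA Y := by
  funext m
  fin_cases m <;>
    simp only [nab, gIP, brS, TS, two, three, e, connCoeff, rotA, Fin.sum_univ_six, Fin.isValue,
      Fin.reduceFinMk, Fin.zero_eta, Fin.mk_one, Fin.reduceEq, ↓reduceIte, Pi.add_apply, Pi.smul_apply,
      smul_eq_mul, Matrix.cons_val_zero, Matrix.cons_val_one, Matrix.cons_val] <;>
    ring

lemma rotA_Jc (Y : Fin 6 → ℝ) : rotA (Jc Y) = Jc (rotA Y) := by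
  funext m
  fin_cases m <;> simp [rotA, Jc]

lemma Jc_smul (a : ℝ) (Y : Fin 6 → ℝ) : Jc (a • Y) = a • Jc Y := by
  funext m
  fin_cases m <;> simp [Jc]

lemma derivAction_rotA_Thp (Y Z V : Fin 6 → ℝ) : derivAction rotA Thp Y Z V = 0 := by
  simp only [derivAction, Thp, three, rotA, Matrix.cons_val_zero, Matrix.cons_val_one,
    Matrix.cons_val]
  ring

lemma derivAction_rotA_Thm (Y Z V : Fin 6 → ℝ) : derivAction rotA Thm Y Z V = 0 := by
  simp only [derivAction, Thm, three, rotA, Matrix.cons_val_zero, Matrix.cons_val_one,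
    Matrix.cons_val]
  ring

lemma Thp_smul (a : ℝ) (Y Z V : Fin 6 → ℝ) :
    Thp (a • Y) Z V = a * Thp Y Z V ∧ Thp Y (a • Z) V = a * Thp Y Z V ∧
      Thp Y Z (a • V) = a * Thp Y Z V := by
  refine ⟨?_, ?_, ?_⟩ <;> simp only [Thp, three, Pi.smul_apply, smul_eq_mul] <;> ring

lemma Thm_smul (a : ℝ) (Y Z V : Fin 6 → ℝ) :
    Thm (a • Y) Z V = a * Thm Y Z V ∧ Thm Y (a • Z) V = a * Thm Y Z V ∧
      Thm Y Z (a • V) = a * Thm Y Z V := by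
  refine ⟨?_, ?_, ?_⟩ <;> simp only [Thm, three, Pi.smul_apply, smul_eq_mul] <;> ring

lemma brS_swap (δ r t : ℝ) (X Y : Fin 6 → ℝ) : brS δ r t Y X = -brS δ r t X Y := by
  funext m
  simp only [brS, two, Pi.add_apply, Pi.smul_apply, Pi.neg_apply, smul_eq_mul]
  ring

lemma TS_swap (δ r t : ℝ) (X Y Z : Fin 6 → ℝ) : TS δ r t Y X Z = -TS δ r t X Y Z := by
  simp only [TS, three]
  ring

lemma sum_TS_e_mul (δ r t : ℝ) (X Y Z : Fin 6 → ℝ) :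
    ∑ m, TS δ r t X Y (e m) * Z m = TS δ r t X Y Z := by
  simp only [TS, three, e, Fin.sum_univ_six, Fin.isValue, Fin.reduceEq, ↓reduceIte]
  ring

lemma sum_TS_e_Jc_e (δ r t : ℝ) (X : Fin 6 → ℝ) : ∑ i, TS δ r t X (e i) (Jc (e i)) = 0 := by
  simp [TS, three, Jc, e, Fin.sum_univ_six]

theorem stmt8_general (δ r t : ℝ) :
    (∀ X Y : Fin 6 → ℝ,
      nab (brS δ r t) (TS δ r t) X (Jc Y) = Jc (nab (brS δ r t) (TS δ r t) X Y)) ∧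
    (∀ X Y Z V : Fin 6 → ℝ, nabForm3 (brS δ r t) (TS δ r t) Thp X Y Z V = 0) ∧
    (∀ X Y Z V : Fin 6 → ℝ, nabForm3 (brS δ r t) (TS δ r t) Thm X Y Z V = 0) ∧
    (∀ X Y Z : Fin 6 → ℝ,
      gIP (nab (brS δ r t) (TS δ r t) X Y - nab (brS δ r t) (TS δ r t) Y X - brS δ r t X Y) Z
        = TS δ r t X Y Z) ∧
    (∀ X : Fin 6 → ℝ, -(1/2) * ∑ i, TS δ r t (Jc X) (e i) (Jc (e i)) = 0) := by
  refine ⟨fun X Y => ?_, fun X Y Z V => ?_, fun X Y Z V => ?_, fun X Y Z => ?_, fun X => ?_⟩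
  · rw [nab_brS_TS, nab_brS_TS, rotA_Jc, Jc_smul]
  · rw [nabForm3_eq_neg_mul_derivAction (nab_brS_TS δ r t) Thp_smul, derivAction_rotA_Thp,
      mul_zero]
  · rw [nabForm3_eq_neg_mul_derivAction (nab_brS_TS δ r t) Thm_smul, derivAction_rotA_Thm,
      mul_zero]
  · rw [gIP_torsion_nab (brS_swap δ r t) (TS_swap δ r t), sum_TS_e_mul]
  · rw [sum_TS_e_Jc_e, mul_zero]

/-- on s^δ_{r,t}, the torsion connection ∇ of T = −(2δt/r²)(e₁₂₆ − e₃₄₆) satisfies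
∇J = 0, ∇Θ⁺ = ∇Θ⁻ = 0, has torsion T, and the Lee form vanishes. -/
theorem stmt8 (δ r t : ℝ) (hδ : δ = 1 ∨ δ = -1) (hr : r ≠ 0) (ht : t ≠ 0) :
    (∀ X Y : Fin 6 → ℝ,
      nab (brS δ r t) (TS δ r t) X (Jc Y) = Jc (nab (brS δ r t) (TS δ r t) X Y)) ∧
    (∀ X Y Z V : Fin 6 → ℝ, nabForm3 (brS δ r t) (TS δ r t) Thp X Y Z V = 0) ∧
    (∀ X Y Z V : Fin 6 → ℝ, nabForm3 (brS δ r t) (TS δ r t) Thm X Y Z V = 0) ∧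
    (∀ X Y Z : Fin 6 → ℝ,
      gIP (nab (brS δ r t) (TS δ r t) X Y - nab (brS δ r t) (TS δ r t) Y X - brS δ r t X Y) Z
        = TS δ r t X Y Z) ∧
    (∀ X : Fin 6 → ℝ, -(1/2) * ∑ i, TS δ r t (Jc X) (e i) (Jc (e i)) = 0) :=
  stmt8_general δ r t
end
end
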